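/- arXiv:2510.14762 — 2 statements merged into one kernel-verified Lean document; each statement's English description precedes it below -/
import Mathlib

section
/- Let G be a subcubic graph with no isolated vertices and let X be a proper subset of the vertex set V(G). Then Φ_G(X) = ξ_G(X) + 2·n_0(G − X); that is, the total increase of vertex weights caused by deleting X equals the number of X-exit edges plus twice the number of isolated vertices of G − X. -/
namespace PaperIndepDom

open SimpleGraph

/-- The degree of a vertex `v` in a graph `G`. -/
noncomputable def deg {V : Type*} (G : SimpleGraph V) (v : V) : ℕ :=
  (G.neighborSet v).ncard

/-- The weight `w_G(v)` of a vertex: `8`, `5`, `4` or `3` according as `deg G v` is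
`0`, `1`, `2` or (at least) `3`. -/
noncomputable def vWeight {V : Type*} (G : SimpleGraph V) (v : V) : ℤ :=
  if deg G v = 0 then 8 else if deg G v = 1 then 5 else if deg G v = 2 then 4 else 3

/-- The set of `X`-exit edges of `G` : edges joining a vertex of `X` to a vertex
outside `X`. -/
def exitEdges {V : Type*} (G : SimpleGraph V) (X : Set V) : Set (Sym2 V) :=
  {e | e ∈ G.edgeSet ∧ ∃ a b, a ∈ X ∧ b ∉ X ∧ e = s(a, b)}

section

variable {V : Type*} (G : SimpleGraph V)

lemma deg_induce (s : Set V) (v : s) :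
    deg (G.induce s) v = (G.neighborSet v ∩ s).ncard := by
  have h : (G.induce s).neighborSet v = Subtype.val ⁻¹' G.neighborSet v := rfl
  rw [deg, h, ← Set.ncard_image_of_injective _ Subtype.val_injective,
    Set.image_preimage_eq_inter_range, Subtype.range_coe]

lemma deg_eq_ncard_inter_add_ncard_inter_compl [Finite V] (X : Set V) (v : V) :
    deg G v = (G.neighborSet v ∩ X).ncard + (G.neighborSet v ∩ Xᶜ).ncard := by
  rw [← Set.sdiff_eq, Set.ncard_inter_add_ncard_sdiff_eq_ncard, deg]

/-- In `G − X`, a surviving vertex loses one unit of degree per deleted neighbour, and each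
unit lost raises its weight by one, except the last, which raises it by three. -/
lemma vWeight_induce_compl_sub_vWeight [Finite V] (X : Set V) (v : ↥Xᶜ)
    (hsub : deg G v ≤ 3) (hnoiso : deg G v ≠ 0) :
    vWeight (G.induce Xᶜ) v - vWeight G v
      = (G.neighborSet v ∩ X).ncard + 2 * if deg (G.induce Xᶜ) v = 0 then 1 else 0 := by
  rw [deg_eq_ncard_inter_add_ncard_inter_compl G X] at hsub hnoiso
  simp only [vWeight, deg_induce, deg_eq_ncard_inter_add_ncard_inter_compl G X]
  split_ifs <;> omega

lemma neighborSet_between_compl {X : Set V} {v : V} (hv : v ∉ X) :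
    (G.between X Xᶜ).neighborSet v = G.neighborSet v ∩ X := by
  ext w
  simp only [mem_neighborSet, between_adj, Set.mem_inter_iff, Set.mem_compl_iff]
  tauto

lemma exitEdges_eq_edgeSet_between (X : Set V) :
    exitEdges G X = (G.between X Xᶜ).edgeSet := by
  ext e
  induction e using Sym2.ind with
  | h u v =>
    simp only [exitEdges, Set.mem_ofPred_eq, mem_edgeSet, between_adj, Set.mem_compl_iff]
    constructor
    · rintro ⟨hadj, a, b, ha, hb, he⟩
      rcases Sym2.eq_iff.mp he with ⟨rfl, rfl⟩ | ⟨rfl, rfl⟩ <;> tauto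
    · rintro ⟨hadj, ⟨hu, hv⟩ | ⟨hu, hv⟩⟩
      · exact ⟨hadj, u, v, hu, hv, rfl⟩
      · exact ⟨hadj, v, u, hv, hu, Sym2.eq_swap⟩

/-- Each `X`-exit edge is counted once, at its endpoint outside `X`. -/
lemma sum_ncard_neighborSet_inter_eq_ncard_exitEdges [Fintype V] (X : Set V)
    [DecidablePred (· ∈ X)] :
    ∑ v : ↥Xᶜ, (G.neighborSet v ∩ X).ncard = (exitEdges G X).ncard := by
  classical
  have hbip : (G.between X Xᶜ).IsBipartiteWith ↑X.toFinset ↑Xᶜ.toFinset := by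
    simpa only [Set.coe_toFinset] using between_isBipartiteWith disjoint_compl_right
  rw [exitEdges_eq_edgeSet_between, ← coe_edgeFinset, Set.ncard_coe_finset,
    ← isBipartiteWith_sum_degrees_eq_card_edges' hbip, ← Finset.sum_set_coe]
  refine Finset.sum_congr rfl fun v _ => ?_
  rw [← card_neighborSet_eq_degree, Set.fintypeCard_eq_ncard, neighborSet_between_compl G v.2]

end

theorem statement6_general {V : Type} [Fintype V] (G : SimpleGraph V)
    (hsub : ∀ v : V, deg G v ≤ 3) (hnoiso : ∀ v : V, deg G v ≠ 0)
    (X : Set V) :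
    (∑ᶠ v : ↥(Xᶜ), (vWeight (G.induce Xᶜ) v - vWeight G (v : V)))
      = ((exitEdges G X).ncard : ℤ)
        + 2 * ({v : ↥(Xᶜ) | deg (G.induce Xᶜ) v = 0}.ncard : ℤ) := by
  classical
  rw [finsum_eq_sum_of_fintype,
    Finset.sum_congr rfl fun v _ => vWeight_induce_compl_sub_vWeight G X v (hsub v) (hnoiso v),
    Finset.sum_add_distrib, ← Finset.mul_sum, Finset.sum_boole,
    ← sum_ncard_neighborSet_inter_eq_ncard_exitEdges G X, Set.ncard_eq_toFinset_card',
    Set.toFinset_ofPred]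
  push_cast
  rfl

/-- Let `G` be a subcubic graph with no isolated vertices and let `X` be
a proper subset of the vertex set. Then `Φ_G(X) = ξ_G(X) + 2·n₀(G − X)`: the total
increase of vertex weights caused by deleting `X` equals the number of `X`-exit edges
plus twice the number of isolated vertices of `G − X`. -/
theorem statement6 {V : Type} [Fintype V] (G : SimpleGraph V)
    (hsub : ∀ v : V, deg G v ≤ 3) (hnoiso : ∀ v : V, deg G v ≠ 0)
    (X : Set V) (hX : X ≠ Set.univ) :
    (∑ᶠ v : ↥(Xᶜ), (vWeight (G.induce Xᶜ) v - vWeight G (v : V)))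
      = ((exitEdges G X).ncard : ℤ)
        + 2 * ({v : ↥(Xᶜ) | deg (G.induce Xᶜ) v = 0}.ncard : ℤ) :=
  statement6_general G hsub hnoiso X

end PaperIndepDom
end

section
/- Let G' be a subcubic graph with no isolated vertices, let v' be a vertex of degree at most 2 in G', and let G be the subcubic graph obtained from G' by adding a vertex-disjoint copy of K_{2,3} and adding an edge joining v' to a vertex of degree 2 in the added copy of K_{2,3}. Then i(G) = i(G') + 2. -/
/-!
Write `a₀, a₁` and `b₀, b₁, b₂` for the two sides of the added `K_{2,3}`, with `b_t` joined to
`v'`. Adding `a₀, a₁` to an independent dominating set of `G'` gives one of `G`. Conversely, an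
independent dominating set `S` of `G` either contains both `aᵢ`, or misses them and then must
contain every `b_j` with `j ≠ t`; so it has at least two vertices in the copy, and all three `b_j`
when `b_t ∈ S`. Its trace on `G'` is independent and dominates every vertex of `G'` other than
`v'`, and `v'` as well unless `b_t ∈ S`; adding `v'` if needed yields an independent dominating
set of `G'` with at most `|S| - 2` vertices.
-/

namespace PaperIndepDom

open SimpleGraph

/-- A set `S` is an independent dominating set of `G`. -/
def IsIDSet {V : Type*} (G : SimpleGraph V) (S : Set V) : Prop :=
  (∀ u ∈ S, ∀ v ∈ S, ¬ G.Adj u v) ∧ ∀ v, v ∉ S → ∃ u ∈ S, G.Adj u v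

/-- The independent domination number `i(G)`. -/
noncomputable def iNum {V : Type*} (G : SimpleGraph V) : ℕ :=
  sInf {n | ∃ S : Set V, IsIDSet G S ∧ S.ncard = n}

/-- The graph obtained from `G` by adding a vertex-disjoint copy of `K_{2,3}`
(on the vertex set `Fin 2 ⊕ Fin 3`) together with an edge joining the vertex `v'` of `G`
to the degree-2 vertex `Sum.inr t` of the added copy of `K_{2,3}`. -/
def addK23 {V : Type*} (G : SimpleGraph V) (v' : V) (t : Fin 3) :
    SimpleGraph (V ⊕ (Fin 2 ⊕ Fin 3)) :=
  SimpleGraph.fromRel (fun x y =>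
    (∃ a b, G.Adj a b ∧ x = Sum.inl a ∧ y = Sum.inl b) ∨
    (∃ i j, x = Sum.inr (Sum.inl i) ∧ y = Sum.inr (Sum.inr j)) ∨
    (x = Sum.inl v' ∧ y = Sum.inr (Sum.inr t)))

open Set

section IsIDSet

variable {V : Type*} {G : SimpleGraph V} {S T : Set V}

lemma IsIDSet.mem_of_forall_not_adj (hS : IsIDSet G S) {v : V} (hv : ∀ u ∈ S, ¬ G.Adj u v) :
    v ∈ S := by
  by_contra hvS
  obtain ⟨u, hu, huv⟩ := hS.2 v hvS
  exact hv u hu huv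

-- A maximal independent set is dominating.
lemma exists_isIDSet [Finite V] (G : SimpleGraph V) : ∃ S : Set V, IsIDSet G S := by
  obtain ⟨S, -, hmax⟩ := Finite.exists_le_maximal (p := G.IsIndepSet) (a := ∅) (by simp)
  refine ⟨S, fun u hu v hv huv => ?_, fun v hvS => ?_⟩
  · exact hmax.1 hu hv (G.ne_of_adj huv) huv
  · by_contra! hv
    have hins : G.IsIndepSet (insert v S) :=
      hmax.1.insert fun u hu _ => ⟨fun h => hv u hu h.symm, hv u hu⟩
    exact hvS (hmax.2 hins (subset_insert v S) (mem_insert v S))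

lemma iNum_le_ncard (hS : IsIDSet G S) : iNum G ≤ S.ncard :=
  Nat.sInf_le ⟨S, hS, rfl⟩

lemma exists_isIDSet_ncard_eq_iNum [Finite V] (G : SimpleGraph V) :
    ∃ S : Set V, IsIDSet G S ∧ S.ncard = iNum G := by
  obtain ⟨S, hS⟩ := exists_isIDSet G
  exact Nat.sInf_mem (s := {n | ∃ S : Set V, IsIDSet G S ∧ S.ncard = n}) ⟨_, S, hS, rfl⟩

lemma iNum_le_ncard_add_one {w : V} (hind : ∀ u ∈ T, ∀ v ∈ T, ¬ G.Adj u v)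
    (hdom : ∀ v ∉ T, v ≠ w → ∃ u ∈ T, G.Adj u v) : iNum G ≤ T.ncard + 1 := by
  by_cases hw : ∃ u ∈ T, G.Adj u w
  · have hT : IsIDSet G T := by
      refine ⟨hind, fun v hv => ?_⟩
      obtain rfl | hvw := eq_or_ne v w
      exacts [hw, hdom v hv hvw]
    exact (iNum_le_ncard hT).trans (Nat.le_succ _)
  · push Not at hw
    have hT : IsIDSet G (insert w T) := by
      refine ⟨?_, fun v hv => ?_⟩
      · rintro u (rfl | hu) v (rfl | hv) huv
        exacts [G.irrefl huv, hw v hv huv.symm, hw u hu huv, hind u hu v hv huv]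
      · rw [mem_insert_iff, not_or] at hv
        obtain ⟨u, hu, huv⟩ := hdom v hv.2 hv.1
        exact ⟨u, mem_insert_of_mem w hu, huv⟩
    exact (iNum_le_ncard hT).trans (ncard_insert_le w T)

end IsIDSet

lemma ncard_eq_ncard_preimage_inl_add_ncard_preimage_inr {α β : Type*} {s : Set (α ⊕ β)}
    (hs : s.Finite) : s.ncard = (Sum.inl ⁻¹' s).ncard + (Sum.inr ⁻¹' s).ncard := by
  conv_lhs => rw [← image_preimage_inl_union_image_preimage_inr s]
  rw [ncard_union_eq disjoint_image_inl_image_inr ((hs.preimage Sum.inl_injective.injOn).image _)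
      ((hs.preimage Sum.inr_injective.injOn).image _),
    ncard_image_of_injective _ Sum.inl_injective, ncard_image_of_injective _ Sum.inr_injective]

section addK23

variable {V : Type*} {G : SimpleGraph V} {v' : V} {t : Fin 3}

@[simp]
lemma addK23_adj_inl_inl {a b : V} : (addK23 G v' t).Adj (.inl a) (.inl b) ↔ G.Adj a b := by
  simpa [addK23, G.adj_comm] using G.ne_of_adj

@[simp]
lemma addK23_adj_inl_inr_inl {a : V} {i : Fin 2} :
    ¬ (addK23 G v' t).Adj (.inl a) (.inr (.inl i)) := by
  simp [addK23]

@[simp]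
lemma addK23_adj_inl_inr_inr {a : V} {j : Fin 3} :
    (addK23 G v' t).Adj (.inl a) (.inr (.inr j)) ↔ a = v' ∧ j = t := by
  simp [addK23, eq_comm]

@[simp]
lemma addK23_adj_inr_inl_inr_inr {i : Fin 2} {j : Fin 3} :
    (addK23 G v' t).Adj (.inr (.inl i)) (.inr (.inr j)) :=
  ⟨by simp, .inl (.inr (.inl ⟨i, j, rfl, rfl⟩))⟩

@[simp]
lemma addK23_adj_inr_inl_inr_inl {i i' : Fin 2} :
    ¬ (addK23 G v' t).Adj (.inr (.inl i)) (.inr (.inl i')) := by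
  simp [addK23]

@[simp]
lemma addK23_adj_inr_inr_inr_inr {j j' : Fin 3} :
    ¬ (addK23 G v' t).Adj (.inr (.inr j)) (.inr (.inr j')) := by
  simp [addK23]

lemma IsIDSet.image_inl_union_range {S : Set V} (hS : IsIDSet G S) :
    IsIDSet (addK23 G v' t) (Sum.inl '' S ∪ Sum.inr '' range Sum.inl) := by
  refine ⟨?_, ?_⟩
  · rintro _ (⟨a, ha, rfl⟩ | ⟨_, ⟨_, rfl⟩, rfl⟩) _ (⟨b, hb, rfl⟩ | ⟨_, ⟨_, rfl⟩, rfl⟩)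
      huv
    · exact hS.1 a ha b hb (addK23_adj_inl_inl.1 huv)
    · exact addK23_adj_inl_inr_inl huv
    · exact addK23_adj_inl_inr_inl huv.symm
    · exact addK23_adj_inr_inl_inr_inl huv
  · rintro (v | i | _) hv
    · obtain ⟨u, hu, huv⟩ := hS.2 v fun h => hv (.inl ⟨v, h, rfl⟩)
      exact ⟨.inl u, .inl ⟨u, hu, rfl⟩, addK23_adj_inl_inl.2 huv⟩
    · exact absurd (.inr ⟨_, ⟨i, rfl⟩, rfl⟩) hv
    · exact ⟨.inr (.inl 0), .inr ⟨_, ⟨0, rfl⟩, rfl⟩, addK23_adj_inr_inl_inr_inr⟩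

lemma ncard_image_inl_union_range_inr_inl {S : Set V} (hS : S.Finite) :
    (Sum.inl '' S ∪ Sum.inr '' range Sum.inl : Set (V ⊕ (Fin 2 ⊕ Fin 3))).ncard =
      S.ncard + 2 := by
  rw [ncard_union_eq disjoint_image_inl_image_inr (hS.image _) (toFinite _),
    ncard_image_of_injective _ Sum.inl_injective, ncard_image_of_injective _ Sum.inr_injective,
    ncard_range_of_injective Sum.inl_injective, Nat.card_eq_fintype_card, Fintype.card_fin]

lemma iNum_addK23_le [Finite V] : iNum (addK23 G v' t) ≤ iNum G + 2 := by
  obtain ⟨S, hS, hcard⟩ := exists_isIDSet_ncard_eq_iNum G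
  calc iNum (addK23 G v' t) ≤ _ := iNum_le_ncard (hS.image_inl_union_range (v' := v') (t := t))
    _ = iNum G + 2 := by rw [ncard_image_inl_union_range_inr_inl (toFinite S), hcard]

variable {S : Set (V ⊕ (Fin 2 ⊕ Fin 3))} (hS : IsIDSet (addK23 G v' t) S)
include hS

lemma IsIDSet.preimage_inl_indep :
    ∀ u ∈ Sum.inl ⁻¹' S, ∀ v ∈ Sum.inl ⁻¹' S, ¬ G.Adj u v :=
  fun _ hu _ hv huv => hS.1 _ hu _ hv (addK23_adj_inl_inl.2 huv)

lemma IsIDSet.preimage_inl_dominates {v : V} (hv : v ∉ Sum.inl ⁻¹' S)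
    (hvt : v ≠ v' ∨ .inr (.inr t) ∉ S) : ∃ u ∈ Sum.inl ⁻¹' S, G.Adj u v := by
  obtain ⟨u | i | j, hu, huv⟩ := hS.2 _ hv
  · exact ⟨u, hu, addK23_adj_inl_inl.1 huv⟩
  · exact absurd huv.symm addK23_adj_inl_inr_inl
  · obtain ⟨rfl, rfl⟩ := addK23_adj_inl_inr_inr.1 huv.symm
    exact absurd hu (hvt.resolve_left (not_not_intro rfl))

lemma IsIDSet.mem_inr_inl_of_mem {i : Fin 2} (hi : .inr (.inl i) ∈ S) (i' : Fin 2) :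
    .inr (.inl i') ∈ S := by
  refine hS.mem_of_forall_not_adj ?_
  rintro (_ | _ | _) hu huv
  · exact addK23_adj_inl_inr_inl huv
  · exact addK23_adj_inr_inl_inr_inl huv
  · exact hS.1 _ hi _ hu addK23_adj_inr_inl_inr_inr

lemma IsIDSet.mem_inr_inr_of_forall_notMem (hA : ∀ i, .inr (.inl i) ∉ S) {j : Fin 3}
    (hj : j ≠ t) : .inr (.inr j) ∈ S := by
  refine hS.mem_of_forall_not_adj ?_
  rintro (_ | i | _) hu huv
  · exact hj (addK23_adj_inl_inr_inr.1 huv).2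
  · exact hA i hu
  · exact addK23_adj_inr_inr_inr_inr huv

lemma IsIDSet.two_le_ncard_preimage_inr : 2 ≤ (Sum.inr ⁻¹' S).ncard := by
  by_cases hA : ∃ i, .inr (.inl i) ∈ S
  · obtain ⟨i, hi⟩ := hA
    have hsub : range Sum.inl ⊆ Sum.inr ⁻¹' S := by
      rintro _ ⟨i', rfl⟩
      exact hS.mem_inr_inl_of_mem hi i'
    calc 2 = (range (Sum.inl : Fin 2 → Fin 2 ⊕ Fin 3)).ncard := by
          simp [ncard_range_of_injective Sum.inl_injective]
      _ ≤ _ := ncard_le_ncard hsub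
  · push Not at hA
    have hsub : Sum.inr '' {t}ᶜ ⊆ Sum.inr ⁻¹' S := by
      rintro _ ⟨j, hj, rfl⟩
      exact hS.mem_inr_inr_of_forall_notMem hA hj
    calc 2 = (Sum.inr '' {t}ᶜ : Set (Fin 2 ⊕ Fin 3)).ncard := by
          rw [ncard_image_of_injective _ Sum.inr_injective, ncard_compl]
          simp
      _ ≤ _ := ncard_le_ncard hsub

lemma IsIDSet.three_le_ncard_preimage_inr (ht : .inr (.inr t) ∈ S) :
    3 ≤ (Sum.inr ⁻¹' S).ncard := by
  have hA : ∀ i, .inr (.inl i) ∉ S := fun i hi => hS.1 _ hi _ ht addK23_adj_inr_inl_inr_inr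
  have hsub : range Sum.inr ⊆ Sum.inr ⁻¹' S := by
    rintro _ ⟨j, rfl⟩
    obtain rfl | hj := eq_or_ne j t
    exacts [ht, hS.mem_inr_inr_of_forall_notMem hA hj]
  calc 3 = (range (Sum.inr : Fin 3 → Fin 2 ⊕ Fin 3)).ncard := by
        simp [ncard_range_of_injective Sum.inr_injective]
    _ ≤ _ := ncard_le_ncard hsub

lemma IsIDSet.iNum_add_two_le_ncard [Finite V] : iNum G + 2 ≤ S.ncard := by
  rw [ncard_eq_ncard_preimage_inl_add_ncard_preimage_inr (toFinite S)]
  by_cases ht : .inr (.inr t) ∈ S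
  · have hG := iNum_le_ncard_add_one (w := v') hS.preimage_inl_indep
      fun v hv hvv' => hS.preimage_inl_dominates hv (.inl hvv')
    have hR := hS.three_le_ncard_preimage_inr ht
    omega
  · have hT : IsIDSet G (Sum.inl ⁻¹' S) :=
      ⟨hS.preimage_inl_indep, fun v hv => hS.preimage_inl_dominates hv (.inr ht)⟩
    have hG := iNum_le_ncard hT
    have hR := hS.two_le_ncard_preimage_inr
    omega

end addK23

theorem statement7_general {V : Type} [Fintype V] (G' : SimpleGraph V)
    (v' : V) (t : Fin 3)
    (G : SimpleGraph (V ⊕ (Fin 2 ⊕ Fin 3))) (hG : G = addK23 G' v' t) :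
    iNum G = iNum G' + 2 := by
  subst hG
  obtain ⟨S, hS, hcard⟩ := exists_isIDSet_ncard_eq_iNum (addK23 G' v' t)
  exact le_antisymm iNum_addK23_le (hcard ▸ hS.iNum_add_two_le_ncard)

/-- **Lemma 1(a).** If `G'` is an isolate-free subcubic graph, `v'` is a
vertex of degree at most `2` in `G'`, and `G` arises from `G'` by adding a disjoint copy
of `K_{2,3}` and an edge joining `v'` to a degree-2 vertex of that copy, then
`i(G) = i(G') + 2`. -/
theorem statement7 {V : Type} [Fintype V] (G' : SimpleGraph V)
    (hsub : ∀ v : V, deg G' v ≤ 3) (hnoiso : ∀ v : V, deg G' v ≠ 0)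
    (v' : V) (hv' : deg G' v' ≤ 2) (t : Fin 3)
    (G : SimpleGraph (V ⊕ (Fin 2 ⊕ Fin 3))) (hG : G = addK23 G' v' t) :
    iNum G = iNum G' + 2 :=
  statement7_general G' v' t G hG

end PaperIndepDom
end
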